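/- Let 0 < θ < 1 and J_n ⊂ {1,...,n}. There exists a constant C > 0 depending only on θ such that υ_n(l) ≤ C^l (υ_n(1) + 1)^l for every l ∈ N, where υ_n(l) = θ^l Σ_{j_1+...+j_l < n, all j_i ∈ J_n} (1/(j_1···j_l)) (1 - (j_1+...+j_l)/n)^{θ-1}. -/

import Mathlib

/-!
Peeling off the first index `j₁ = a` of a tuple factors `1 - (a + s)/m` as
`(1 - a/m) (1 - s/(m - a))`, so
`υ_m(l+1) = θ ∑_{a ∈ J, a < m} a⁻¹ (1 - a/m)^{θ-1} υ_{m-a}(l)`.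
Hence a bound `υ_m(1) ≤ C` for all `m ≤ n` gives `υ_n(l) ≤ C^l` by induction on `l`, and
`C = 2 υ_n(1) + 2` works: the terms with `a ≤ m/2` are at most twice the corresponding
terms of `υ_n(1)`, while for `a > m/2` we have `a⁻¹ ≤ 2/m` and the remaining sum of
`(1 - a/m)^{θ-1}` is a Riemann sum of `∫₀¹ (1 - x)^{θ-1} dx = 1/θ`.
-/

open Finset Real

/-- `υ_n(l) = θ^l Σ_{j_1+⋯+j_l < n, j_i ∈ J} (1/(j_1⋯j_l)) (1 - (j_1+⋯+j_l)/n)^{θ-1}`. -/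
noncomputable def upsilon (θ : ℝ) (n : ℕ) (J : Finset ℕ) (l : ℕ) : ℝ :=
  θ ^ l * ∑ j ∈ (Fintype.piFinset fun _ : Fin l => J).filter (fun j => ∑ i, j i < n),
    (∏ i, (j i : ℝ))⁻¹ * (1 - (∑ i, j i : ℝ) / n) ^ (θ - 1)

theorem Finset.sum_piFinset_fin_succ {α M : Type*} [AddCommMonoid M] {l : ℕ} (s : Finset α)
    (f : (Fin (l + 1) → α) → M) :
    ∑ x ∈ Fintype.piFinset (fun _ => s), f x =
      ∑ a ∈ s, ∑ x ∈ Fintype.piFinset (fun _ => s), f (Fin.cons a x) := by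
  have := Finset.filter_piFinset_eq_map_consEquiv (fun _ : Fin (l + 1) => s) (fun _ => True)
  simp only [filter_true] at this
  rw [this, sum_map, sum_product]
  rfl

lemma one_sub_add_div_rpow {a s m : ℝ} (ha : 0 ≤ a) (ham : a < m) (hsm : s ≤ m - a) (p : ℝ) :
    (1 - (a + s) / m) ^ p = (1 - a / m) ^ p * (1 - s / (m - a)) ^ p := by
  have hm : 0 < m := ha.trans_lt ham
  have hma : 0 < m - a := sub_pos.2 ham
  rw [← mul_rpow]
  · congr 1
    field_simp
    ring
  · rw [sub_nonneg, div_le_one hm]; exact ham.le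
  · rw [sub_nonneg, div_le_one hma]; exact hsm

lemma one_sub_div_cast_nonneg {a m : ℕ} (h : a ≤ m) : 0 ≤ 1 - (a : ℝ) / m :=
  sub_nonneg.2 (div_le_one_of_le₀ (Nat.cast_le.2 h) m.cast_nonneg)

lemma mul_rpow_sub_one_le_rpow_sub_rpow {θ x : ℝ} (hθ0 : 0 ≤ θ) (hθ1 : θ ≤ 1) (hx : 1 ≤ x) :
    θ * x ^ (θ - 1) ≤ x ^ θ - (x - 1) ^ θ := by
  have hx0 : 0 < x := one_pos.trans_le hx
  have bernoulli : (1 + -x⁻¹) ^ θ ≤ 1 + θ * -x⁻¹ :=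
    rpow_one_add_le_one_add_mul_self (by linarith [inv_le_one_of_one_le₀ hx]) hθ0 hθ1
  have hfactor : (x - 1) ^ θ = (1 + -x⁻¹) ^ θ * x ^ θ := by
    rw [← mul_rpow (by linarith [inv_le_one_of_one_le₀ hx]) hx0.le]
    congr 1
    field_simp
    ring
  have hpow : x ^ (θ - 1) = x ^ θ * x⁻¹ := by rw [rpow_sub_one hx0.ne', div_eq_mul_inv]
  rw [hfactor, hpow]
  nlinarith [mul_le_mul_of_nonneg_right bernoulli (rpow_nonneg hx0.le θ)]

lemma sum_range_add_one_rpow_le {θ : ℝ} (hθ0 : 0 < θ) (hθ1 : θ ≤ 1) (M : ℕ) :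
    ∑ k ∈ range M, ((k : ℝ) + 1) ^ (θ - 1) ≤ (M : ℝ) ^ θ / θ := by
  induction M with
  | zero => simp [zero_rpow hθ0.ne']
  | succ M ih =>
    have step := mul_rpow_sub_one_le_rpow_sub_rpow hθ0.le hθ1 (le_add_of_nonneg_left M.cast_nonneg)
    rw [add_sub_cancel_right] at step
    rw [sum_range_succ, Nat.cast_succ, le_div_iff₀ hθ0] at *
    linarith

/-- `m` times a Riemann sum of `∫₀¹ (1 - x) ^ (θ - 1) dx = 1 / θ`. -/
lemma sum_range_one_sub_div_rpow_le {θ : ℝ} (hθ0 : 0 < θ) (hθ1 : θ ≤ 1) (m : ℕ) :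
    ∑ a ∈ range m, (1 - (a : ℝ) / m) ^ (θ - 1) ≤ m / θ := by
  rcases m.eq_zero_or_pos with rfl | hm
  · simp
  have hm' : (0 : ℝ) < m := Nat.cast_pos.2 hm
  have reflect : ∀ a ∈ range m, (1 - ((m - 1 - a : ℕ) : ℝ) / m) ^ (θ - 1)
      = ((a : ℝ) + 1) ^ (θ - 1) / (m : ℝ) ^ (θ - 1) := by
    intro a ha
    rw [mem_range] at ha
    rw [← div_rpow (by positivity) hm'.le, Nat.cast_sub (by omega), Nat.cast_sub hm]
    congr 1
    field_simp
    push_cast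
    ring
  calc ∑ a ∈ range m, (1 - (a : ℝ) / m) ^ (θ - 1)
      = (∑ a ∈ range m, ((a : ℝ) + 1) ^ (θ - 1)) / (m : ℝ) ^ (θ - 1) := by
        rw [← sum_range_reflect, sum_congr rfl reflect, sum_div]
    _ ≤ (m : ℝ) ^ θ / θ / (m : ℝ) ^ (θ - 1) := by
        gcongr
        exact sum_range_add_one_rpow_le hθ0 hθ1 m
    _ = m / θ := by
        rw [div_right_comm, ← rpow_sub hm', sub_sub_cancel, rpow_one]

lemma upsilon_zero (θ : ℝ) (m : ℕ) (J : Finset ℕ) :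
    upsilon θ m J 0 = if 0 < m then 1 else 0 := by
  simp only [upsilon]
  split_ifs <;> simp [*]

noncomputable def upsilonWeight (θ : ℝ) (m a : ℕ) : ℝ :=
  (a : ℝ)⁻¹ * (1 - (a : ℝ) / m) ^ (θ - 1)

lemma upsilon_succ (θ : ℝ) (m : ℕ) (J : Finset ℕ) (l : ℕ) :
    upsilon θ m J (l + 1) =
      θ * ∑ a ∈ J with a < m, upsilonWeight θ m a * upsilon θ (m - a) J l := by
  -- `F m k x` is the summand of `υ_m(k)` at the tuple `x`, with the filter folded into an `if`.
  set F : ℕ → ∀ k, (Fin k → ℕ) → ℝ := fun m _ x =>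
    if ∑ i, x i < m then (∏ i, (x i : ℝ))⁻¹ * (1 - (∑ i, x i : ℝ) / m) ^ (θ - 1) else 0
  have peel (a : ℕ) (x : Fin l → ℕ) :
      F m (l + 1) (Fin.cons a x) = if a < m then upsilonWeight θ m a * F (m - a) l x else 0 := by
    simp only [F, upsilonWeight, Fin.sum_univ_succ, Fin.prod_univ_succ, Fin.cons_zero,
      Fin.cons_succ]
    by_cases ham : a < m
    · by_cases hx : ∑ i, x i < m - a
      · have hsm : (∑ i, (x i : ℝ)) ≤ m - a := by
          rw [← Nat.cast_sum, ← Nat.cast_sub ham.le]; exact_mod_cast hx.le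
        rw [if_pos (by omega), if_pos ham, if_pos hx, one_sub_add_div_rpow (Nat.cast_nonneg a)
          (by exact_mod_cast ham) hsm, Nat.cast_sub ham.le, mul_inv]
        ring
      · rw [if_neg (by omega), if_pos ham, if_neg hx, mul_zero]
    · rw [if_neg (by omega), if_neg ham]
  simp only [upsilon, sum_filter]
  change θ ^ (l + 1) * ∑ x ∈ _, F m (l + 1) x = θ * ∑ a ∈ J, if a < m then
    upsilonWeight θ m a * (θ ^ l * ∑ x ∈ _, F (m - a) l x) else 0
  simp only [sum_piFinset_fin_succ, peel, mul_sum, pow_succ]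
  refine sum_congr rfl fun a _ => ?_
  split_ifs
  · rw [mul_sum]
    exact sum_congr rfl fun x _ => by ring
  · simp

lemma upsilon_one (θ : ℝ) (m : ℕ) (J : Finset ℕ) :
    upsilon θ m J 1 = θ * ∑ a ∈ J with a < m, upsilonWeight θ m a := by
  rw [upsilon_succ]
  congr 1
  refine sum_congr rfl fun a ha => ?_
  rw [upsilon_zero, if_pos (Nat.sub_pos_of_lt (mem_filter.1 ha).2), mul_one]

lemma upsilonWeight_nonneg (θ : ℝ) {m a : ℕ} (ham : a ≤ m) : 0 ≤ upsilonWeight θ m a :=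
  mul_nonneg (by positivity) (rpow_nonneg (one_sub_div_cast_nonneg ham) _)

lemma upsilon_nonneg {θ : ℝ} (hθ : 0 ≤ θ) (m : ℕ) (J : Finset ℕ) (l : ℕ) :
    0 ≤ upsilon θ m J l := by
  induction l generalizing m with
  | zero => rw [upsilon_zero]; split_ifs <;> norm_num
  | succ l ih =>
    rw [upsilon_succ]
    exact mul_nonneg hθ (sum_nonneg fun a ha =>
      mul_nonneg (upsilonWeight_nonneg θ (mem_filter.1 ha).2.le) (ih _))

lemma upsilonWeight_le_two_mul {θ : ℝ} (hθ0 : 0 ≤ θ) (hθ1 : θ ≤ 1) {m n a : ℕ} (ham : a < m)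
    (h2a : 2 * a ≤ m) (hmn : m ≤ n) : upsilonWeight θ m a ≤ 2 * upsilonWeight θ n a := by
  have hm : (0 : ℝ) < m := by exact_mod_cast a.zero_le.trans_lt ham
  have hn : (0 : ℝ) < n := hm.trans_le (by exact_mod_cast hmn)
  have hhalf : (1 : ℝ) / 2 ≤ 1 - (a : ℝ) / m := by
    rw [le_sub_comm, div_le_iff₀ hm]
    linarith [show (2 * a : ℝ) ≤ m by exact_mod_cast h2a]
  have han : (a : ℝ) / n < 1 := (div_lt_one hn).2 (by exact_mod_cast ham.trans_le hmn)
  have hm_le_two : (1 - (a : ℝ) / m) ^ (θ - 1) ≤ 2 := calc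
    (1 - (a : ℝ) / m) ^ (θ - 1) ≤ (1 / 2 : ℝ) ^ (θ - 1) :=
      rpow_le_rpow_of_nonpos (by norm_num) hhalf (by linarith)
    _ ≤ (1 / 2 : ℝ) ^ (-1 : ℝ) :=
      rpow_le_rpow_of_exponent_ge (by norm_num) (by norm_num) (by linarith)
    _ = 2 := by norm_num
  have hn_ge_one : 1 ≤ (1 - (a : ℝ) / n) ^ (θ - 1) :=
    one_le_rpow_of_pos_of_le_one_of_nonpos (by linarith) (sub_le_self _ (by positivity))
      (by linarith)
  unfold upsilonWeight
  rw [mul_left_comm]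
  exact mul_le_mul_of_nonneg_left (by linarith) (by positivity)

lemma mul_sum_upsilonWeight_le_two {θ : ℝ} (hθ0 : 0 < θ) (hθ1 : θ ≤ 1) {m : ℕ} {s : Finset ℕ}
    (hs : ∀ a ∈ s, a < m ∧ m < 2 * a) : θ * ∑ a ∈ s, upsilonWeight θ m a ≤ 2 := by
  rcases s.eq_empty_or_nonempty with rfl | ⟨a₀, ha₀⟩
  · simp
  have hm : (0 : ℝ) < m := by exact_mod_cast a₀.zero_le.trans_lt (hs a₀ ha₀).1
  have hweight : ∀ a ∈ s, upsilonWeight θ m a ≤ 2 / m * (1 - (a : ℝ) / m) ^ (θ - 1) := by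
    intro a ha
    obtain ⟨ham, hma⟩ := hs a ha
    have ha_inv : (a : ℝ)⁻¹ ≤ 2 / m := by
      rw [inv_eq_one_div, div_le_div_iff₀ (by exact_mod_cast (by omega : 0 < a)) hm]
      rw [one_mul]; exact_mod_cast hma.le
    exact mul_le_mul_of_nonneg_right ha_inv (rpow_nonneg (one_sub_div_cast_nonneg ham.le) _)
  calc θ * ∑ a ∈ s, upsilonWeight θ m a
      ≤ θ * (2 / m * ∑ a ∈ range m, (1 - (a : ℝ) / m) ^ (θ - 1)) := by
        gcongr θ * ?_
        rw [mul_sum]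
        refine (sum_le_sum hweight).trans (sum_le_sum_of_subset_of_nonneg
          (fun a ha => mem_range.2 (hs a ha).1) fun a ha _ => ?_)
        exact mul_nonneg (by positivity)
          (rpow_nonneg (one_sub_div_cast_nonneg (mem_range.1 ha).le) _)
    _ ≤ θ * (2 / m * (m / θ)) := by
        gcongr
        exact sum_range_one_sub_div_rpow_le hθ0 hθ1 m
    _ = 2 := by field_simp

lemma upsilon_one_le_of_le {θ : ℝ} (hθ0 : 0 < θ) (hθ1 : θ ≤ 1) (J : Finset ℕ) {m n : ℕ}
    (hmn : m ≤ n) : upsilon θ m J 1 ≤ 2 * upsilon θ n J 1 + 2 := by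
  have small : θ * ∑ a ∈ {a ∈ J | a < m} with 2 * a ≤ m, upsilonWeight θ m a
      ≤ 2 * upsilon θ n J 1 := by
    rw [upsilon_one, mul_left_comm]
    gcongr θ * ?_
    rw [mul_sum]
    refine (sum_le_sum fun a ha => ?_).trans (sum_le_sum_of_subset_of_nonneg ?_ fun a ha _ => ?_)
    · simp only [mem_filter] at ha
      exact upsilonWeight_le_two_mul hθ0.le hθ1 ha.1.2 ha.2 hmn
    · intro a ha
      simp only [mem_filter] at ha ⊢
      exact ⟨ha.1.1, ha.1.2.trans_le hmn⟩
    · exact mul_nonneg zero_le_two (upsilonWeight_nonneg θ (mem_filter.1 ha).2.le)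
  have large : θ * ∑ a ∈ {a ∈ J | a < m} with ¬2 * a ≤ m, upsilonWeight θ m a ≤ 2 :=
    mul_sum_upsilonWeight_le_two hθ0 hθ1 fun a ha => by
      simp only [mem_filter] at ha
      omega
  rw [upsilon_one, ← sum_filter_add_sum_filter_not _ (fun a => 2 * a ≤ m), mul_add]
  linarith

lemma upsilon_le_pow_of_forall_upsilon_one_le {θ C : ℝ} (hθ : 0 ≤ θ) {n : ℕ} {J : Finset ℕ}
    (hC : ∀ m ≤ n, upsilon θ m J 1 ≤ C) (l : ℕ) {m : ℕ} (hmn : m ≤ n) :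
    upsilon θ m J l ≤ C ^ l := by
  induction l generalizing m with
  | zero => rw [upsilon_zero, pow_zero]; split_ifs <;> norm_num
  | succ l ih =>
    have hC0 : 0 ≤ C := (upsilon_nonneg hθ 0 J 1).trans (hC 0 n.zero_le)
    calc upsilon θ m J (l + 1)
        ≤ θ * ∑ a ∈ J with a < m, upsilonWeight θ m a * C ^ l := by
          rw [upsilon_succ]
          gcongr with a ha
          · exact upsilonWeight_nonneg θ (mem_filter.1 ha).2.le
          · exact ih ((m.sub_le a).trans hmn)
      _ = upsilon θ m J 1 * C ^ l := by rw [upsilon_one, ← sum_mul, mul_assoc]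
      _ ≤ C ^ (l + 1) := by
          rw [pow_succ']
          exact mul_le_mul_of_nonneg_right (hC m hmn) (pow_nonneg hC0 l)

theorem upsilon_le_pow_small_theta (θ : ℝ) (hθ0 : 0 < θ) (hθ1 : θ < 1) :
    ∃ C > (0:ℝ), ∀ n : ℕ, ∀ J : Finset ℕ, J ⊆ Finset.Icc 1 n →
      ∀ l : ℕ, 1 ≤ l →
        upsilon θ n J l ≤ C ^ l * (upsilon θ n J 1 + 1) ^ l := by
  refine ⟨2, two_pos, fun n J _ l _ => ?_⟩
  calc upsilon θ n J l ≤ (2 * upsilon θ n J 1 + 2) ^ l :=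
        upsilon_le_pow_of_forall_upsilon_one_le hθ0.le
          (fun m hmn => upsilon_one_le_of_le hθ0 hθ1.le J hmn) l le_rfl
    _ = 2 ^ l * (upsilon θ n J 1 + 1) ^ l := by rw [← mul_pow]; ring
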